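/- arXiv:2512.18223 — 3 statements merged into one kernel-verified Lean document; each statement's English description precedes it below -/
import Mathlib

section
/- Every point inside the closed disk of radius 1/√3 centered at the origin is within distance 1/√3 of at least one of the three points A = (0, -1/√3), B = (1/2, 1/(2√3)), C = (-1/2, 1/(2√3)). -/
noncomputable def pt (x y : ℝ) : EuclideanSpace ℝ (Fin 2) := WithLp.toLp 2 ![x, y]

/-!
Let `r = 1/√3`. For a vertex `v` (with `‖v‖ = r`), `‖p - v‖² = ‖p‖² - 2⟪p, v⟫ + r²`, so `p` is
within `r` of `v` as soon as `‖p‖² ≤ 2⟪p, v⟫`. The three numbers `2⟪p, v⟫` sum to `0`, because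
the vertices do, and their squares sum to `2‖p‖²`. Three reals summing to `0` and all below `c`
have squares summing to less than `6c²`; with `c = ‖p‖²` this would force `‖p‖² > 1/3`.
-/

open Real RealInnerProductSpace

theorem dist_le_norm_of_norm_sq_le_two_inner {E : Type*} [NormedAddCommGroup E]
    [InnerProductSpace ℝ E] {p v : E} (h : ‖p‖ ^ 2 ≤ 2 * ⟪p, v⟫) : dist p v ≤ ‖v‖ := by
  rw [dist_eq_norm]
  refine le_of_pow_le_pow_left₀ two_ne_zero (norm_nonneg _) ?_
  rw [norm_sub_sq_real]
  linarith

theorem le_or_le_or_le_of_add_add_eq_zero {u v w c : ℝ} (hsum : u + v + w = 0)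
    (hsq : 6 * c ^ 2 ≤ u ^ 2 + v ^ 2 + w ^ 2) : c ≤ u ∨ c ≤ v ∨ c ≤ w := by
  by_contra! h
  obtain ⟨hu, hv, hw⟩ := h
  -- When `u + v + w = 0`, the sum of `(c - u) (c - v)` over the three pairs is `3c² - (u² + v² + w²)/2`.
  nlinarith [mul_pos (sub_pos.2 hu) (sub_pos.2 hv), mul_pos (sub_pos.2 hv) (sub_pos.2 hw),
    mul_pos (sub_pos.2 hw) (sub_pos.2 hu)]

theorem pt_zero_zero : pt 0 0 = 0 := by
  ext i; fin_cases i <;> simp [pt]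

theorem inner_pt (p : EuclideanSpace ℝ (Fin 2)) (a b : ℝ) : ⟪p, pt a b⟫ = p 0 * a + p 1 * b := by
  simp [pt, PiLp.inner_apply, Fin.sum_univ_two, mul_comm]

theorem norm_pt (a b : ℝ) : ‖pt a b‖ = √(a ^ 2 + b ^ 2) := by
  simp [EuclideanSpace.norm_eq, pt, Fin.sum_univ_two]

theorem norm_sq_eq_fin_two (p : EuclideanSpace ℝ (Fin 2)) : ‖p‖ ^ 2 = p 0 ^ 2 + p 1 ^ 2 := by
  simp [EuclideanSpace.norm_sq_eq, Fin.sum_univ_two]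

theorem stmt_2 (p : EuclideanSpace ℝ (Fin 2))
    (hp : dist p (pt 0 0) ≤ 1 / Real.sqrt 3) :
    dist p (pt 0 (-(1 / Real.sqrt 3))) ≤ 1 / Real.sqrt 3 ∨
    dist p (pt (1 / 2) (1 / (2 * Real.sqrt 3))) ≤ 1 / Real.sqrt 3 ∨
    dist p (pt (-(1 / 2)) (1 / (2 * Real.sqrt 3))) ≤ 1 / Real.sqrt 3 := by
  set r := 1 / √3 with hr
  have hr_sq : r ^ 2 = 1 / 3 := by rw [hr, div_pow, sq_sqrt (by norm_num), one_pow]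
  have hr_pos : 0 < r := by positivity
  have hp_sq : ‖p‖ ^ 2 ≤ r ^ 2 := by
    rw [pt_zero_zero, dist_zero_right] at hp
    gcongr
  have hnorm (a b : ℝ) (h : a ^ 2 + b ^ 2 = r ^ 2) : ‖pt a b‖ = r := by
    rw [norm_pt, h, sqrt_sq hr_pos.le]
  rw [show 1 / (2 * √3) = r / 2 by rw [hr]; field_simp]
  set u := 2 * ⟪p, pt 0 (-r)⟫ with hu
  set v := 2 * ⟪p, pt (1 / 2) (r / 2)⟫ with hv
  set w := 2 * ⟪p, pt (-(1 / 2)) (r / 2)⟫ with hw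
  have hsum : u + v + w = 0 := by
    simp only [hu, hv, hw, inner_pt]; ring
  have hsq_sum : u ^ 2 + v ^ 2 + w ^ 2 = 2 * ‖p‖ ^ 2 := by
    simp only [hu, hv, hw, inner_pt, norm_sq_eq_fin_two]
    linear_combination (6 * p 1 ^ 2) * hr_sq
  have hsq : 6 * (‖p‖ ^ 2) ^ 2 ≤ u ^ 2 + v ^ 2 + w ^ 2 := by
    rw [hsq_sum]; nlinarith [sq_nonneg ‖p‖]
  rcases le_or_le_or_le_of_add_add_eq_zero hsum hsq with h | h | h
  · exact .inl <| (dist_le_norm_of_norm_sq_le_two_inner h).trans_eq (hnorm _ _ (by ring))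
  · exact .inr <| .inl <| (dist_le_norm_of_norm_sq_le_two_inner h).trans_eq
      (hnorm _ _ (by linear_combination (-3 / 4) * hr_sq))
  · exact .inr <| .inr <| (dist_le_norm_of_norm_sq_le_two_inner h).trans_eq
      (hnorm _ _ (by linear_combination (-3 / 4) * hr_sq))
end

section
/- Let D₁ and D₂ be two closed disks in the plane whose boundary circles intersect in exactly two distinct points p and q, and let C be one of the two open boundary arcs of D₁ between p and q. If some point r of C lies outside D₂, then every point of C lies outside D₂. -/
theorem stmt_4 (c₁ c₂ : EuclideanSpace ℝ (Fin 2)) (r₁ r₂ : ℝ)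
    (hr₁ : 0 < r₁) (hr₂ : 0 < r₂) (p q : EuclideanSpace ℝ (Fin 2)) (hpq : p ≠ q)
    (hcirc : Metric.sphere c₁ r₁ ∩ Metric.sphere c₂ r₂ = {p, q})
    (C : Set (EuclideanSpace ℝ (Fin 2)))
    (hCsub : C ⊆ Metric.sphere c₁ r₁)
    (hCavoid : p ∉ C ∧ q ∉ C)
    (hCconn : IsConnected C)
    (r : EuclideanSpace ℝ (Fin 2)) (hr : r ∈ C)
    (hrout : dist r c₂ > r₂) :
    ∀ x ∈ C, dist x c₂ > r₂ := by
  intro x hx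
  by_contra hle
  push_neg at hle
  have hcont : ContinuousOn (fun y => dist y c₂) C :=
    (continuous_id.dist continuous_const).continuousOn
  have hiv := hCconn.isPreconnected.intermediate_value hx hr hcont
  have hmem : r₂ ∈ Set.Icc (dist x c₂) (dist r c₂) := ⟨hle, le_of_lt hrout⟩
  obtain ⟨y, hyC, hy⟩ := hiv hmem
  have : y ∈ Metric.sphere c₁ r₁ ∩ Metric.sphere c₂ r₂ := ⟨hCsub hyC, hy⟩
  rw [hcirc] at this
  rcases this with h | h <;> subst h
  · exact hCavoid.1 hyC
  · exact hCavoid.2 hyC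
end

section
/- Let r ∈ [1,3] and set r' = 3 + r(2/√3 - 1). Let c₁ ≈ be the point in the fourth quadrant satisfying x² + (y + 1/√3)² = 9 and x² + y² = r'², and let c₂ = (-(√3/2)·r', (1/2)·r'). Then the distance |c₁ c₂| is strictly greater than 6. In other words, two disks of radius 3 with centers c₁ and c₂ are disjoint. -/
lemma dist_pt (a b c d : ℝ) :
    dist (pt a b) (pt c d) = √((a - c) ^ 2 + (b - d) ^ 2) := by
  rw [EuclideanSpace.dist_eq]
  simp [pt, Fin.sum_univ_two, Real.dist_eq, sq_abs]

lemma one_div_sqrt_three : 1 / √3 = √3 / 3 := by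
  field_simp
  norm_num

lemma lt_sqrt_three : (1.732 : ℝ) < √3 := by
  rw [Real.lt_sqrt (by norm_num)]
  norm_num

lemma radius_mem_Icc {r : ℝ} (hr1 : 1 ≤ r) (hr3 : r ≤ 3) :
    3 + r * (2 / √3 - 1) ∈ Set.Icc (2 + 2 * √3 / 3) (2 * √3) := by
  have h : 2 / √3 = 2 * √3 / 3 := by
    rw [div_eq_mul_one_div 2, one_div_sqrt_three]
    ring
  have hs : 1 < √3 := by linarith [lt_sqrt_three]
  have hs3 : √3 ^ 2 = 3 := Real.sq_sqrt (by norm_num)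
  rw [h]
  constructor <;> nlinarith

lemma radical_axis {x y R : ℝ} (h1 : x ^ 2 + (y + 1 / √3) ^ 2 = 9) (h2 : x ^ 2 + y ^ 2 = R ^ 2) :
    2 * √3 * y = 26 - 3 * R ^ 2 := by
  have hs3 : √3 ^ 2 = 3 := Real.sq_sqrt (by norm_num)
  rw [one_div_sqrt_three] at h1
  linear_combination 3 * h1 - 3 * h2 - 1 / 3 * hs3

-- On the range of `R`: `u = R² ≥ (2 + 2√3/3)² > 9.95`, `u ≤ 12` and `t = √3 R ≥ 2√3 + 2 > 5.46`.
lemma cubic_pos {u t : ℝ} (hu : 9.95 ≤ u) (hu' : u ≤ 12) (ht : 5.46 ≤ t) :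
    0 < 3 * u ^ 2 - u * (26 - 3 * u) ^ 2 / 3 - (36 - 2 * u) ^ 2
      + (36 - 2 * u) * (3 * u - 26) * t / 3 := by
  have hc : 0 ≤ (36 - 2 * u) * (3 * u - 26) := by nlinarith
  nlinarith [mul_le_mul_of_nonneg_left ht hc, mul_nonneg (sub_nonneg.2 hu) (sub_nonneg.2 hu'),
    mul_nonneg (mul_nonneg (sub_nonneg.2 hu) (sub_nonneg.2 hu')) (sub_nonneg.2 hu)]

lemma lt_sqrt_three_mul {R x y : ℝ} (hR : R ∈ Set.Icc (2 + 2 * √3 / 3) (2 * √3)) (hx : 0 < x)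
    (hxy : x ^ 2 + y ^ 2 = R ^ 2) (hy : 2 * √3 * y = 26 - 3 * R ^ 2) :
    36 - 2 * R ^ 2 + R * y < √3 * R * x := by
  obtain ⟨hlo, hhi⟩ := hR
  have hsl := lt_sqrt_three
  have hs3 : √3 ^ 2 = 3 := Real.sq_sqrt (by norm_num)
  have hu : 9.95 ≤ R ^ 2 := by nlinarith
  have hu' : R ^ 2 ≤ 12 := by nlinarith
  have ht : 5.46 ≤ √3 * R := by nlinarith
  have hsq : (36 - 2 * R ^ 2 + R * y) ^ 2 < (√3 * R * x) ^ 2 := by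
    have h12 : 12 * y ^ 2 = (26 - 3 * R ^ 2) ^ 2 := by
      linear_combination (2 * √3 * y + (26 - 3 * R ^ 2)) * hy - 4 * y ^ 2 * hs3
    have hRy : 6 * (R * y) = (26 - 3 * R ^ 2) * (√3 * R) := by
      linear_combination (√3 * R) * hy - 2 * R * y * hs3
    have hx2 : x ^ 2 = R ^ 2 - y ^ 2 := by linarith
    have hexp : (√3 * R * x) ^ 2 - (36 - 2 * R ^ 2 + R * y) ^ 2 =
        3 * (R ^ 2) ^ 2 - R ^ 2 * (26 - 3 * R ^ 2) ^ 2 / 3 - (36 - 2 * R ^ 2) ^ 2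
          + (36 - 2 * R ^ 2) * (3 * R ^ 2 - 26) * (√3 * R) / 3 := by
      linear_combination (R ^ 2 * x ^ 2) * hs3 + 3 * R ^ 2 * hx2 - R ^ 2 / 3 * h12
        - (36 - 2 * R ^ 2) / 3 * hRy
    linarith [cubic_pos hu hu' ht]
  exact lt_of_abs_lt (abs_lt_of_sq_lt_sq hsq (by nlinarith))

theorem stmt_5_general (r x y : ℝ) (hr1 : 1 ≤ r) (hr3 : r ≤ 3)
    (r' : ℝ) (hr' : r' = 3 + r * (2 / Real.sqrt 3 - 1))
    (hx : x > 0)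
    (h1 : x ^ 2 + (y + 1 / Real.sqrt 3) ^ 2 = 9)
    (h2 : x ^ 2 + y ^ 2 = r' ^ 2) :
    dist (pt x y) (pt (-(Real.sqrt 3 / 2) * r') (r' / 2)) > 6 := by
  have hR : r' ∈ Set.Icc (2 + 2 * √3 / 3) (2 * √3) := hr' ▸ radius_mem_Icc hr1 hr3
  have key := lt_sqrt_three_mul hR hx h2 (radical_axis h1 h2)
  have hs3 : √3 ^ 2 = 3 := Real.sq_sqrt (by norm_num)
  have hdist :
      (x - -(√3 / 2) * r') ^ 2 + (y - r' / 2) ^ 2 = 2 * r' ^ 2 + √3 * r' * x - r' * y := by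
    linear_combination h2 + r' ^ 2 / 4 * hs3
  rw [dist_pt, hdist, gt_iff_lt, Real.lt_sqrt (by norm_num)]
  linarith

theorem stmt_5 (r x y : ℝ) (hr1 : 1 ≤ r) (hr3 : r ≤ 3)
    (r' : ℝ) (hr' : r' = 3 + r * (2 / Real.sqrt 3 - 1))
    (hx : x > 0) (hy : y < 0)
    (h1 : x ^ 2 + (y + 1 / Real.sqrt 3) ^ 2 = 9)
    (h2 : x ^ 2 + y ^ 2 = r' ^ 2) :
    dist (pt x y) (pt (-(Real.sqrt 3 / 2) * r') (r' / 2)) > 6 :=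
  stmt_5_general r x y hr1 hr3 r' hr' hx h1 h2
end
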